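/- Fix H ∈ H_Z and consider the map C_H : α ↦ π_Z(α)H, defined for α ∈ L^∞(𝕋) by (π_Z(α)H)(z,x) = α(z)H(z,x). Then C_H extends to a bounded operator from L²(𝕋) to H_Z if and only if p₂(H) ∈ L^∞(𝕋), and in that case its operator norm equals ‖p₂(H)‖_∞^{1/2}. Moreover, C_H is bounded below (has a bounded inverse onto its range) if and only if there exists ε > 0 with p₂(H)(z) ≥ ε for a.e. z ∈ 𝕋. -/

import Mathlib

open MeasureTheory Complex Real Filter Topology

noncomputable section

/-- The normalized Haar measure `μ` of the circle `𝕋`, realized on the fundamental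
domain `(0, 2π]` of `ℝ` via the identification `z = e^{-iω}`. -/
def muT : Measure ℝ := (ENNReal.ofReal (2 * π))⁻¹ • (volume.restrict (Set.Ioc 0 (2 * π)))

/-- The measure on `𝕋 × [0,1]` underlying the Hilbert space `H_Z` (Zak-transform side). -/
def muZ : Measure (ℝ × ℝ) := muT.prod (volume.restrict (Set.Ioc 0 1))

/-- `L²(𝕋)`. -/
abbrev L2T : Type := MeasureTheory.Lp ℂ 2 muT

/-- The Hilbert space `H_Z ≃ L²(𝕋 × [0,1])`, the range of the Zak transform. -/
abbrev HZ : Type := MeasureTheory.Lp ℂ 2 muZ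

/-- `C` is (the bounded `L²(𝕋) → H_Z` extension of) the map `C_H : α ↦ π_Z(α)H`,
`(π_Z(α)H)(z,x) = α(z)H(z,x)`, characterized on `α ∈ L^∞(𝕋)`. -/
def IsCH (H : HZ) (C : L2T →L[ℂ] HZ) : Prop :=
  ∀ (α : ℝ → ℂ) (hα : MeasureTheory.MemLp α 2 muT), Measurable α →
    (∃ c, ∀ ω, ‖α ω‖ ≤ c) →
      ⇑(C (hα.toLp α)) =ᵐ[muZ] fun p : ℝ × ℝ => α p.1 * (⇑H) p

/-- `p₂(H)(ω) = ∫₀¹ |H(ω,x)|² dx`. -/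
def p2 (H : HZ) (ω : ℝ) : ℝ := ∫ x in Set.Ioc (0 : ℝ) 1, ‖(⇑H) (ω, x)‖ ^ 2

/-!
By Tonelli, `‖(α ∘ fst) · H‖² = ∫ |α|² p₂(H) dμ`: on `L²(𝕋)` the map `C_H` is, isometrically,
multiplication by `p₂(H)^{1/2}`. It is therefore bounded exactly when `p₂(H)` is essentially
bounded, with norm `‖p₂(H)‖_∞^{1/2}`, and bounded below exactly when `p₂(H)` is essentially
bounded away from `0`. Necessity of both bounds comes from testing `C` on indicators of sets of
finite measure; an extension is unique since bounded measurable functions (simple functions) are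
dense in `L²`.
-/

open scoped ENNReal

theorem eLpNorm_two_sq {α E : Type*} [MeasurableSpace α] [NormedAddCommGroup E]
    (μ : Measure α) (f : α → E) : eLpNorm f 2 μ ^ 2 = ∫⁻ a, ‖f a‖ₑ ^ 2 ∂μ := by
  simpa using eLpNorm_nnreal_pow_eq_lintegral (f := f) (μ := μ) (p := 2) two_ne_zero

theorem norm_le_sqrt_mul_norm_of_enorm_sq_le {E F : Type*} [NormedAddCommGroup E]
    [NormedAddCommGroup F] {x : E} {y : F} {c : ℝ}
    (h : ‖y‖ₑ ^ 2 ≤ ENNReal.ofReal c * ‖x‖ₑ ^ 2) : ‖y‖ ≤ √c * ‖x‖ := by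
  rw [← ofReal_norm, ← ofReal_norm, ← ENNReal.ofReal_pow (norm_nonneg _),
    ← ENNReal.ofReal_pow (norm_nonneg _), ← ENNReal.ofReal_mul' (by positivity),
    ENNReal.ofReal_le_ofReal_iff'] at h
  rcases h with h | h
  · calc ‖y‖ = √(‖y‖ ^ 2) := (Real.sqrt_sq (norm_nonneg y)).symm
      _ ≤ √(c * ‖x‖ ^ 2) := Real.sqrt_le_sqrt h
      _ = √c * ‖x‖ := by rw [Real.sqrt_mul' _ (by positivity), Real.sqrt_sq (norm_nonneg x)]
  · have : ‖y‖ = 0 := by nlinarith [norm_nonneg y]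
    rw [this]
    positivity

theorem sqrt_mul_norm_le_norm_of_le_enorm_sq {E F : Type*} [NormedAddCommGroup E]
    [NormedAddCommGroup F] {x : E} {y : F} {c : ℝ}
    (h : ENNReal.ofReal c * ‖x‖ₑ ^ 2 ≤ ‖y‖ₑ ^ 2) : √c * ‖x‖ ≤ ‖y‖ := by
  rw [← ofReal_norm, ← ofReal_norm, ← ENNReal.ofReal_pow (norm_nonneg _),
    ← ENNReal.ofReal_pow (norm_nonneg _), ← ENNReal.ofReal_mul' (by positivity),
    ENNReal.ofReal_le_ofReal_iff (by positivity)] at h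
  calc √c * ‖x‖ = √(c * ‖x‖ ^ 2) := by
        rw [Real.sqrt_mul' _ (by positivity), Real.sqrt_sq (norm_nonneg x)]
    _ ≤ √(‖y‖ ^ 2) := Real.sqrt_le_sqrt h
    _ = ‖y‖ := Real.sqrt_sq (norm_nonneg y)

theorem lintegral_mul_le_of_ae_le {X : Type*} [MeasurableSpace X] {μ : Measure X}
    {f g : X → ℝ≥0∞} {a : ℝ≥0∞} (ha : a ≠ ∞) (hg : ∀ᵐ x ∂μ, g x ≤ a) :
    ∫⁻ x, f x * g x ∂μ ≤ a * ∫⁻ x, f x ∂μ := by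
  rw [← lintegral_const_mul' a f ha]
  exact lintegral_mono_ae (hg.mono fun x hx => by rw [mul_comm]; gcongr)

theorem mul_lintegral_le_of_ae_le {X : Type*} [MeasurableSpace X] {μ : Measure X}
    {f g : X → ℝ≥0∞} {a : ℝ≥0∞} (hg : ∀ᵐ x ∂μ, a ≤ g x) :
    a * ∫⁻ x, f x ∂μ ≤ ∫⁻ x, f x * g x ∂μ :=
  (lintegral_const_mul_le a f).trans
    (lintegral_mono_ae (hg.mono fun x hx => by rw [mul_comm]; gcongr))

theorem ae_eq_comp_fst {X Y Z : Type*} [MeasurableSpace X] [MeasurableSpace Y] {μ : Measure X}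
    {ν : Measure Y} {f g : X → Z} (h : f =ᵐ[μ] g) :
    (fun p : X × Y => f p.1) =ᵐ[μ.prod ν] fun p => g p.1 :=
  Measure.quasiMeasurePreserving_fst.ae_eq_comp h

section FiberMultiplication

variable {X Y : Type*} [MeasurableSpace X] [MeasurableSpace Y] {μ : Measure X} {ν : Measure Y}

-- `p2` with a lower Lebesgue integral, so that non-integrable fibres are not sent to the junk `0`.
variable (ν) in
def fiberNormSq (H : X × Y → ℂ) (x : X) : ℝ≥0∞ := ∫⁻ y, ‖H (x, y)‖ₑ ^ 2 ∂ν

theorem integral_norm_sq_eq_toReal_fiberNormSq (H : Lp ℂ 2 (μ.prod ν)) (x : X) :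
    ∫ y, ‖H (x, y)‖ ^ 2 ∂ν = (fiberNormSq ν H x).toReal := by
  have hsection : Measurable fun y => ‖H (x, y)‖ ^ 2 :=
    ((Lp.stronglyMeasurable H).measurable.comp measurable_prodMk_left).norm.pow_const 2
  rw [integral_eq_lintegral_of_nonneg_ae (.of_forall fun y => by positivity)
    hsection.aestronglyMeasurable, fiberNormSq]
  simp_rw [ENNReal.ofReal_pow (norm_nonneg _), ofReal_norm]

variable [SFinite ν]

theorem measurable_fiberNormSq (H : Lp ℂ 2 (μ.prod ν)) : Measurable (fiberNormSq ν H) :=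
  ((Lp.stronglyMeasurable H).enorm.pow_const 2).lintegral_prod_right'

theorem lintegral_enorm_mul_sq_eq {α : X → ℂ} (hα : AEMeasurable α μ) (H : Lp ℂ 2 (μ.prod ν)) :
    ∫⁻ p, ‖α p.1 * H p‖ₑ ^ 2 ∂μ.prod ν = ∫⁻ x, ‖α x‖ₑ ^ 2 * fiberNormSq ν H x ∂μ := by
  have hα' : AEMeasurable (fun p : X × Y => α p.1) (μ.prod ν) :=
    hα.comp_quasiMeasurePreserving Measure.quasiMeasurePreserving_fst
  simp_rw [enorm_mul, mul_pow]
  rw [lintegral_prod (fun p => ‖α p.1‖ₑ ^ 2 * ‖H p‖ₑ ^ 2)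
    ((hα'.enorm.pow_const 2).mul ((Lp.aestronglyMeasurable H).enorm.pow_const 2))]
  simp_rw [fiberNormSq, lintegral_const_mul' _ _ (ENNReal.pow_ne_top enorm_ne_top)]

theorem lintegral_fiberNormSq (H : Lp ℂ 2 (μ.prod ν)) :
    ∫⁻ x, fiberNormSq ν H x ∂μ = ‖H‖ₑ ^ 2 := by
  simpa [Lp.enorm_def, eLpNorm_two_sq] using
    (lintegral_enorm_mul_sq_eq (α := fun _ => 1) aemeasurable_const H).symm

theorem ae_fiberNormSq_lt_top (H : Lp ℂ 2 (μ.prod ν)) : ∀ᵐ x ∂μ, fiberNormSq ν H x < ∞ :=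
  ae_lt_top (measurable_fiberNormSq H) (by
    rw [lintegral_fiberNormSq]; exact ENNReal.pow_ne_top enorm_ne_top)

theorem ae_fiberNormSq_le_ofReal {H : Lp ℂ 2 (μ.prod ν)} {c : ℝ}
    (h : ∀ᵐ x ∂μ, (fiberNormSq ν H x).toReal ≤ c) :
    ∀ᵐ x ∂μ, fiberNormSq ν H x ≤ ENNReal.ofReal c := by
  filter_upwards [h, ae_fiberNormSq_lt_top H] with x hle hfin
  exact (ENNReal.ofReal_toReal hfin.ne).symm.trans_le (ENNReal.ofReal_le_ofReal hle)

theorem ae_ofReal_le_fiberNormSq_iff {H : Lp ℂ 2 (μ.prod ν)} {c : ℝ} :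
    (∀ᵐ x ∂μ, ENNReal.ofReal c ≤ fiberNormSq ν H x) ↔
      ∀ᵐ x ∂μ, c ≤ (fiberNormSq ν H x).toReal :=
  eventually_congr <| (ae_fiberNormSq_lt_top H).mono fun _ hfin =>
    ENNReal.ofReal_le_iff_le_toReal hfin.ne

variable {H : Lp ℂ 2 (μ.prod ν)} {c : ℝ} (hq : ∀ᵐ x ∂μ, fiberNormSq ν H x ≤ ENNReal.ofReal c)
include hq

theorem memLp_mul_of_ae_fiberNormSq_le {α : X → ℂ} (hα : MemLp α 2 μ) :
    MemLp (fun p => α p.1 * H p) 2 (μ.prod ν) := by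
  refine ⟨(hα.1.comp_quasiMeasurePreserving Measure.quasiMeasurePreserving_fst).mul
    (Lp.aestronglyMeasurable H), ?_⟩
  have hsq : eLpNorm (fun p => α p.1 * H p) 2 (μ.prod ν) ^ 2 < ∞ := by
    rw [eLpNorm_two_sq, lintegral_enorm_mul_sq_eq hα.1.aemeasurable]
    refine (lintegral_mul_le_of_ae_le ENNReal.ofReal_ne_top hq).trans_lt
      (ENNReal.mul_lt_top ENNReal.ofReal_lt_top ?_)
    rw [← eLpNorm_two_sq]
    exact ENNReal.pow_lt_top hα.2
  simpa using hsq

theorem enorm_toLp_mul_sq {α : X → ℂ} (hα : MemLp α 2 μ) :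
    ‖(memLp_mul_of_ae_fiberNormSq_le hq hα).toLp _‖ₑ ^ 2
      = ∫⁻ x, ‖α x‖ₑ ^ 2 * fiberNormSq ν H x ∂μ := by
  rw [Lp.enorm_toLp, eLpNorm_two_sq, lintegral_enorm_mul_sq_eq hα.1.aemeasurable]

def fiberMul : Lp ℂ 2 μ →L[ℂ] Lp ℂ 2 (μ.prod ν) :=
  LinearMap.mkContinuous
    { toFun f := (memLp_mul_of_ae_fiberNormSq_le hq (Lp.memLp f)).toLp _
      map_add' f g := by
        rw [← MemLp.toLp_add]
        refine MemLp.toLp_congr _ _ ?_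
        filter_upwards [ae_eq_comp_fst (ν := ν) (Lp.coeFn_add f g)] with p hp
        simp only [hp, Pi.add_apply, add_mul]
      map_smul' a f := by
        rw [RingHom.id_apply, ← MemLp.toLp_const_smul]
        refine MemLp.toLp_congr _ _ ?_
        filter_upwards [ae_eq_comp_fst (ν := ν) (Lp.coeFn_smul a f)] with p hp
        simp only [hp, Pi.smul_apply, smul_eq_mul, mul_assoc] }
    √c fun f => norm_le_sqrt_mul_norm_of_enorm_sq_le <| by
      rw [LinearMap.coe_mk, AddHom.coe_mk, enorm_toLp_mul_sq hq (Lp.memLp f), Lp.enorm_def,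
        eLpNorm_two_sq]
      exact lintegral_mul_le_of_ae_le ENNReal.ofReal_ne_top hq

theorem enorm_fiberMul_apply_sq (f : Lp ℂ 2 μ) :
    ‖fiberMul hq f‖ₑ ^ 2 = ∫⁻ x, ‖f x‖ₑ ^ 2 * fiberNormSq ν H x ∂μ :=
  enorm_toLp_mul_sq hq (Lp.memLp f)

theorem coeFn_fiberMul (f : Lp ℂ 2 μ) : fiberMul hq f =ᵐ[μ.prod ν] fun p => f p.1 * H p :=
  MemLp.coeFn_toLp (memLp_mul_of_ae_fiberNormSq_le hq (Lp.memLp f))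

theorem norm_fiberMul_le : ‖fiberMul hq‖ ≤ √c :=
  LinearMap.mkContinuous_norm_le _ (Real.sqrt_nonneg c) _

end FiberMultiplication

theorem enorm_indicatorConstLp_one_sq {X : Type*} [MeasurableSpace X] {μ : Measure X} {s : Set X}
    (hs : MeasurableSet s) (hμs : μ s ≠ ∞) : ‖indicatorConstLp 2 hs hμs (1 : ℂ)‖ₑ ^ 2 = μ s := by
  rw [Lp.enorm_def, eLpNorm_congr_ae indicatorConstLp_coeFn, eLpNorm_two_sq,
    ← lintegral_indicator_one hs]
  congr 1
  ext x
  by_cases hx : x ∈ s <;> simp [hx]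

section Extension

variable {X Y : Type*} [MeasurableSpace X] [MeasurableSpace Y] {μ : Measure X} {ν : Measure Y}

-- `IsCH H C` is this predicate for `μ = muT` and `ν` Lebesgue measure on `(0, 1]`.
def IsFiberMulExtension (H : X × Y → ℂ) (C : Lp ℂ 2 μ →L[ℂ] Lp ℂ 2 (μ.prod ν)) : Prop :=
  ∀ (α : X → ℂ) (hα : MemLp α 2 μ), Measurable α → (∃ c, ∀ x, ‖α x‖ ≤ c) →
    C (hα.toLp α) =ᵐ[μ.prod ν] fun p => α p.1 * H p

variable [SFinite ν] {H : Lp ℂ 2 (μ.prod ν)} {C : Lp ℂ 2 μ →L[ℂ] Lp ℂ 2 (μ.prod ν)} {c : ℝ}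

theorem isFiberMulExtension_fiberMul (hq : ∀ᵐ x ∂μ, fiberNormSq ν H x ≤ ENNReal.ofReal c) :
    IsFiberMulExtension H (fiberMul hq) := fun α hα _ _ => by
  filter_upwards [coeFn_fiberMul hq (hα.toLp α), ae_eq_comp_fst (ν := ν) hα.coeFn_toLp]
    with p hmul hα_eq
  rw [hmul, hα_eq]

omit [SFinite ν] in
theorem IsFiberMulExtension.ext {C' : Lp ℂ 2 μ →L[ℂ] Lp ℂ 2 (μ.prod ν)}
    (hC : IsFiberMulExtension H C) (hC' : IsFiberMulExtension H C') : C = C' := by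
  refine DFunLike.coe_injective <|
    (Lp.simpleFunc.denseRange (p := 2) ENNReal.ofNat_ne_top).equalizer C.continuous
      C'.continuous (funext fun f => Lp.ext ?_)
  set α := Lp.simpleFunc.toSimpleFunc f
  have hf : (f : Lp ℂ 2 μ) = (Lp.simpleFunc.memLp f).toLp α := by
    rw [← Lp.simpleFunc.toLp_eq_toLp, Lp.simpleFunc.toLp_toSimpleFunc]
  have hbdd := α.exists_forall_norm_le
  simp only [Function.comp_apply, hf]
  exact (hC α _ α.measurable hbdd).trans (hC' α _ α.measurable hbdd).symm

theorem IsFiberMulExtension.eq_fiberMul (hC : IsFiberMulExtension H C)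
    (hq : ∀ᵐ x ∂μ, fiberNormSq ν H x ≤ ENNReal.ofReal c) : C = fiberMul hq :=
  hC.ext (isFiberMulExtension_fiberMul hq)

theorem IsFiberMulExtension.enorm_apply_indicatorConstLp_sq (hC : IsFiberMulExtension H C)
    {s : Set X} (hs : MeasurableSet s) (hμs : μ s ≠ ∞) :
    ‖C (indicatorConstLp 2 hs hμs 1)‖ₑ ^ 2 = ∫⁻ x in s, fiberNormSq ν H x ∂μ := by
  have hind : Measurable (s.indicator fun _ => (1 : ℂ)) := measurable_const.indicator hs
  have hbdd : ∃ c, ∀ x, ‖s.indicator (fun _ => (1 : ℂ)) x‖ ≤ c :=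
    ⟨1, fun x => by by_cases hx : x ∈ s <;> simp [hx]⟩
  calc ‖C (indicatorConstLp 2 hs hμs 1)‖ₑ ^ 2
      = eLpNorm (fun p => s.indicator (fun _ => (1 : ℂ)) p.1 * H p) 2 (μ.prod ν) ^ 2 := by
        rw [Lp.enorm_def]
        exact congrArg (· ^ 2) (eLpNorm_congr_ae (hC _ _ hind hbdd))
    _ = ∫⁻ x in s, fiberNormSq ν H x ∂μ := by
        rw [eLpNorm_two_sq, lintegral_enorm_mul_sq_eq hind.aemeasurable,
          ← lintegral_indicator hs]
        congr 1
        ext x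
        by_cases hx : x ∈ s <;> simp [hx]

theorem IsFiberMulExtension.norm_le (hC : IsFiberMulExtension H C)
    (hq : ∀ᵐ x ∂μ, fiberNormSq ν H x ≤ ENNReal.ofReal c) : ‖C‖ ≤ √c :=
  hC.eq_fiberMul hq ▸ norm_fiberMul_le hq

variable [SigmaFinite μ]

theorem IsFiberMulExtension.ae_fiberNormSq_le (hC : IsFiberMulExtension H C) :
    ∀ᵐ x ∂μ, fiberNormSq ν H x ≤ ENNReal.ofReal (‖C‖ ^ 2) := by
  refine ae_le_of_forall_setLIntegral_le_of_sigmaFinite (measurable_fiberNormSq H)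
    fun s hs hμs => ?_
  calc ∫⁻ x in s, fiberNormSq ν H x ∂μ
      = ‖C (indicatorConstLp 2 hs hμs.ne 1)‖ₑ ^ 2 :=
        (hC.enorm_apply_indicatorConstLp_sq hs hμs.ne).symm
    _ ≤ (‖C‖ₑ * ‖indicatorConstLp 2 hs hμs.ne (1 : ℂ)‖ₑ) ^ 2 := by gcongr; exact C.le_opENorm _
    _ = ∫⁻ _ in s, ENNReal.ofReal (‖C‖ ^ 2) ∂μ := by
        rw [mul_pow, enorm_indicatorConstLp_one_sq, setLIntegral_const,
          ENNReal.ofReal_pow (norm_nonneg _), ofReal_norm]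

theorem IsFiberMulExtension.ae_le_fiberNormSq (hC : IsFiberMulExtension H C) {ε : ℝ}
    (hε : 0 ≤ ε) (hlow : ∀ f, ε * ‖f‖ ≤ ‖C f‖) :
    ∀ᵐ x ∂μ, ENNReal.ofReal (ε ^ 2) ≤ fiberNormSq ν H x := by
  refine ae_le_of_forall_setLIntegral_le_of_sigmaFinite measurable_const fun s hs hμs => ?_
  calc ∫⁻ _ in s, ENNReal.ofReal (ε ^ 2) ∂μ
      = (ENNReal.ofReal ε * ‖indicatorConstLp 2 hs hμs.ne (1 : ℂ)‖ₑ) ^ 2 := by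
        rw [mul_pow, enorm_indicatorConstLp_one_sq, setLIntegral_const, ENNReal.ofReal_pow hε]
    _ ≤ ‖C (indicatorConstLp 2 hs hμs.ne 1)‖ₑ ^ 2 := by
        gcongr
        rw [← ofReal_norm, ← ofReal_norm, ← ENNReal.ofReal_mul hε]
        exact ENNReal.ofReal_le_ofReal (hlow _)
    _ = ∫⁻ x in s, fiberNormSq ν H x ∂μ := hC.enorm_apply_indicatorConstLp_sq hs hμs.ne

theorem IsFiberMulExtension.sqrt_mul_norm_le (hC : IsFiberMulExtension H C)
    (hq : ∀ᵐ x ∂μ, ENNReal.ofReal c ≤ fiberNormSq ν H x) (f : Lp ℂ 2 μ) :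
    √c * ‖f‖ ≤ ‖C f‖ := by
  rw [hC.eq_fiberMul hC.ae_fiberNormSq_le]
  refine sqrt_mul_norm_le_norm_of_le_enorm_sq ?_
  rw [enorm_fiberMul_apply_sq, Lp.enorm_def, eLpNorm_two_sq]
  exact mul_lintegral_le_of_ae_le hq

theorem IsFiberMulExtension.ae_toReal_fiberNormSq_le (hC : IsFiberMulExtension H C) :
    ∀ᵐ x ∂μ, (fiberNormSq ν H x).toReal ≤ ‖C‖ ^ 2 :=
  hC.ae_fiberNormSq_le.mono fun _ hx => ENNReal.toReal_le_of_le_ofReal (by positivity) hx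

theorem exists_isFiberMulExtension_iff :
    (∃ C : Lp ℂ 2 μ →L[ℂ] Lp ℂ 2 (μ.prod ν), IsFiberMulExtension H C) ↔
      ∃ c : ℝ, ∀ᵐ x ∂μ, (fiberNormSq ν H x).toReal ≤ c :=
  ⟨fun ⟨C, hC⟩ => ⟨‖C‖ ^ 2, hC.ae_toReal_fiberNormSq_le⟩,
   fun ⟨_, hc⟩ => ⟨_, isFiberMulExtension_fiberMul (ae_fiberNormSq_le_ofReal hc)⟩⟩

theorem IsFiberMulExtension.norm_eq_sqrt_essSup [NeZero μ] (hC : IsFiberMulExtension H C) :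
    ‖C‖ = √(essSup (fun x => (fiberNormSq ν H x).toReal) μ) := by
  have hle := hC.ae_toReal_fiberNormSq_le
  refine le_antisymm
    (hC.norm_le (ae_fiberNormSq_le_ofReal (ae_le_essSup (isBoundedUnder_of_eventually_le hle))))
    (Real.sqrt_le_iff.2 ⟨norm_nonneg C, essSup_le_of_ae_le _ hle
      (isCoboundedUnder_le_of_le _ fun _ => ENNReal.toReal_nonneg)⟩)

theorem IsFiberMulExtension.exists_pos_mul_norm_le_iff (hC : IsFiberMulExtension H C) :
    (∃ ε > (0 : ℝ), ∀ f, ε * ‖f‖ ≤ ‖C f‖) ↔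
      ∃ ε > (0 : ℝ), ∀ᵐ x ∂μ, ε ≤ (fiberNormSq ν H x).toReal := by
  constructor
  · rintro ⟨ε, hε, hlow⟩
    exact ⟨ε ^ 2, by positivity,
      ae_ofReal_le_fiberNormSq_iff.1 (hC.ae_le_fiberNormSq hε.le hlow)⟩
  · rintro ⟨ε, hε, hq⟩
    exact ⟨√ε, Real.sqrt_pos.2 hε, hC.sqrt_mul_norm_le (ae_ofReal_le_fiberNormSq_iff.2 hq)⟩

end Extension

instance : IsProbabilityMeasure muT := by
  constructor
  rw [muT, Measure.smul_apply, Measure.restrict_apply_univ, Real.volume_Ioc, sub_zero,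
    smul_eq_mul, ENNReal.inv_mul_cancel (by positivity) ENNReal.ofReal_ne_top]

theorem p2_eq_toReal_fiberNormSq (H : HZ) (ω : ℝ) :
    p2 H ω = (fiberNormSq (volume.restrict (Set.Ioc 0 1)) H ω).toReal :=
  integral_norm_sq_eq_toReal_fiberNormSq (μ := muT) H ω

/-- Proposition 4.6: `C_H` extends to a bounded operator
`L²(𝕋) → H_Z` iff `p₂(H) ∈ L^∞(𝕋)`; in that case `‖C_H‖ = ‖p₂(H)‖_∞^{1/2}`; and `C_H` is
bounded below iff `p₂(H) ≥ ε > 0` a.e. on `𝕋`. -/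
theorem CH_bounded_iff_p2_bounded (H : HZ) :
    ((∃ C : L2T →L[ℂ] HZ, IsCH H C) ↔ ∃ c : ℝ, ∀ᵐ ω ∂muT, p2 H ω ≤ c) ∧
    (∀ C : L2T →L[ℂ] HZ, IsCH H C →
      ‖C‖ = Real.sqrt (sInf {c : ℝ | ∀ᵐ ω ∂muT, p2 H ω ≤ c})) ∧
    ∀ C : L2T →L[ℂ] HZ, IsCH H C →
      ((∃ ε > (0 : ℝ), ∀ α : L2T, ε * ‖α‖ ≤ ‖C α‖) ↔
        ∃ ε > (0 : ℝ), ∀ᵐ ω ∂muT, ε ≤ p2 H ω) := by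
  -- `sInf {c | ∀ᵐ ω, f ω ≤ c}` is `limsup f (ae muT)`, i.e. `essSup f muT`.
  simp only [p2_eq_toReal_fiberNormSq, ← Filter.limsup_eq]
  exact ⟨exists_isFiberMulExtension_iff,
    fun _ hC => IsFiberMulExtension.norm_eq_sqrt_essSup hC,
    fun _ hC => IsFiberMulExtension.exists_pos_mul_norm_le_iff hC⟩

end
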